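/- arXiv:1406.3168 — 6 statements merged into one kernel-verified Lean document; each statement's English description precedes it below -/
import Mathlib

section
/- Let p be a prime and a a generator of a cyclic group of order p. Then (a-1)^{p-1} - T_a is divisible by p in Z_p[⟨a⟩], where T_a = 1 + a + ... + a^{p-1}. -/
open Finset

lemma choose_sub_one_mod_p (p : ℕ) (hp : p.Prime) :
    ∀ m, m < p → (((p - 1).choose m : ZMod p)) = (-1) ^ m := by
  intro m
  induction m with
  | zero => simp
  | succ k ih =>
    intro hk
    have hkp : k < p := by omega
    have hchoose : p.choose (k + 1) = (p - 1).choose k + (p - 1).choose (k + 1) := by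
      conv_lhs => rw [show p = p - 1 + 1 by omega]
      exact Nat.choose_succ_succ _ _
    have h0 : ((p.choose (k + 1) : ZMod p)) = 0 := by
      rw [ZMod.natCast_eq_zero_iff]
      exact hp.dvd_choose_self (Nat.succ_ne_zero k) hk
    have hsum : (((p - 1).choose k : ZMod p)) + (((p - 1).choose (k + 1) : ZMod p)) = 0 := by
      rw [hchoose] at h0
      push_cast at h0 ⊢
      linear_combination h0
    rw [ih hkp] at hsum
    linear_combination hsum

/-- **Lemma 3.2.4** (Bley–Cobbe): in the group ring `ℤ_[p][⟨a⟩]` of a cyclic group of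
prime order `p`, the element `(a-1)^(p-1) - T_a` is divisible by `p`,
where `T_a = 1 + a + ⋯ + a^{p-1}`. -/
theorem pow_sub_trace_div_p
    (p : ℕ) [Fact p.Prime] (G : Type*) [CommGroup G] (a : G)
    (ha : orderOf a = p) (hgen : ∀ g : G, g ∈ Subgroup.zpowers a) :
    (p : MonoidAlgebra ℤ_[p] G) ∣
      ((MonoidAlgebra.of ℤ_[p] G a - 1) ^ (p - 1)
        - ∑ i ∈ range p, MonoidAlgebra.of ℤ_[p] G a ^ i) := by
  have hp := (Fact.out : p.Prime)
  set x := MonoidAlgebra.of ℤ_[p] G a with hx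
  have hpsub : p - 1 + 1 = p := Nat.sub_add_cancel hp.one_lt.le
  have hexp : (x - 1) ^ (p - 1)
      = ∑ m ∈ range p, (-1 : MonoidAlgebra ℤ_[p] G) ^ (m + (p - 1)) * x ^ m
          * ((p - 1).choose m : MonoidAlgebra ℤ_[p] G) := by
    rw [sub_pow, hpsub]
    refine Finset.sum_congr rfl fun m _ => by rw [one_pow]; ring
  rw [hexp, ← Finset.sum_sub_distrib]
  refine Finset.dvd_sum fun m hm => ?_
  rw [Finset.mem_range] at hm
  -- integer coefficient
  set c : ℤ := (-1) ^ (m + (p - 1)) * ((p - 1).choose m : ℤ) - 1 with hc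
  have hcz : ((c : ℤ) : ZMod p) = 0 := by
    rw [hc]
    push_cast
    rw [choose_sub_one_mod_p p hp m hm]
    have hne : (-1 : ZMod p) ≠ 0 := by
      haveI : Fact p.Prime := ⟨hp⟩
      simpa using (neg_ne_zero.mpr (one_ne_zero : (1 : ZMod p) ≠ 0))
    have h1 : (-1 : ZMod p) ^ (p - 1) = 1 := ZMod.pow_card_sub_one_eq_one hne
    rw [pow_add, mul_comm ((-1 : ZMod p) ^ m), mul_assoc, ← pow_add,
      ← two_mul, pow_mul, neg_one_sq, one_pow, mul_one, h1, sub_self]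
  have hdvdc : (p : ℤ) ∣ c := (ZMod.intCast_zmod_eq_zero_iff_dvd c p).mp hcz
  have hdvdMA : (p : MonoidAlgebra ℤ_[p] G) ∣ (c : MonoidAlgebra ℤ_[p] G) := by
    obtain ⟨d, hd⟩ := hdvdc
    exact ⟨(d : MonoidAlgebra ℤ_[p] G), by rw [hd]; push_cast; ring⟩
  have hterm : (-1 : MonoidAlgebra ℤ_[p] G) ^ (m + (p - 1)) * x ^ m
      * ((p - 1).choose m : MonoidAlgebra ℤ_[p] G) - x ^ m
      = (c : MonoidAlgebra ℤ_[p] G) * x ^ m := by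
    rw [hc]; push_cast; ring
  rw [hterm]
  exact hdvdMA.mul_right _
end

section
/- Let F be a field of characteristic p and c ∈ F with Σ_{i=0}^{n-1} c^{p^i} = 1. Then the polynomial X^p - X + c divides X^{p^n} - X + 1 in F[X]. -/
open Polynomial Finset

/-- Residue-field form of **Lemma 3.1.3** (Bley–Cobbe): if `F` has characteristic `p` and
`c ∈ F` satisfies `∑_{i=0}^{n-1} c^{p^i} = 1`, then `X^p - X + c` divides
`X^{p^n} - X + 1` in `F[X]`. -/
theorem artin_schreier_divides
    (p : ℕ) (hp : p.Prime) (F : Type*) [Field F] [CharP F p]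
    (n : ℕ) (hn : 0 < n) (c : F)
    (hc : ∑ i ∈ range n, c ^ (p ^ i) = 1) :
    (X ^ p - X + C c) ∣ (X ^ (p ^ n) - X + 1 : F[X]) := by
  haveI := Fact.mk hp
  have key : (X ^ (p ^ n) - X + 1 : F[X])
      = ∑ i ∈ range n, (X ^ p - X + C c) ^ (p ^ i) := by
    have hterm : ∀ i, ((X : F[X]) ^ p - X + C c) ^ (p ^ i)
        = X ^ (p ^ (i + 1)) - X ^ (p ^ i) + C (c ^ (p ^ i)) := by
      intro i
      rw [add_pow_char_pow, sub_pow_char_pow, ← pow_mul, ← C_pow, pow_succ', mul_comm]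
    calc (X ^ (p ^ n) - X + 1 : F[X])
        = (∑ i ∈ range n, ((X:F[X]) ^ (p ^ (i+1)) - X ^ (p ^ i)))
          + ∑ i ∈ range n, C (c ^ (p ^ i)) := by
          rw [Finset.sum_range_sub (fun i => (X : F[X]) ^ (p ^ i)), ← map_sum C (fun i => c ^ p ^ i) (range n),
            hc]
          simp
      _ = ∑ i ∈ range n, (X ^ p - X + C c) ^ (p ^ i) := by
          rw [← Finset.sum_add_distrib]
          exact Finset.sum_congr rfl fun i _ => (hterm i).symm
  rw [key]
  exact Finset.dvd_sum fun i _ => dvd_pow_self _ (pow_ne_zero i hp.pos.ne')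
end

section
/- Let p, d be coprime, G = ⟨a⟩ × ⟨b⟩ with ord(a)=p, ord(b)=d. Define δ_2 : Z[G]z_1 ⊕ Z[G]z_2 → Z[G]z_0 by δ_2(z_1) = (b-1)z_0, δ_2(z_2) = (a-1)z_0. Then ker(δ_2) is generated as a Z[G]-module by the three elements (a-1)z_1 - (b-1)z_2, T_b·z_1, and T_a·z_2, where T_a = Σ_{i=0}^{p-1}a^i and T_b = Σ_{j=0}^{d-1}b^j. -/
/-!
Multiplying a relation `u (b - 1) + w (a - 1) = 0` by `T_b` gives `w T_b (a - 1) = 0`. An element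
annihilated by `a - 1` is constant on the cosets of `⟨a⟩`, hence a multiple of `T_a`; so
`w T_b ∈ T_a ℤ[G]`. As `T_b ≡ d` modulo `b - 1` and `T_a ≡ p` modulo `a - 1`, both `d w` and `p w`
lie in the ideal `(T_a, b - 1)`, hence so does `w` because `p` and `d` are coprime. Writing
`w = f T_a - h (b - 1)`, the relation becomes `(u - h (a - 1)) (b - 1) = 0`, so `u - h (a - 1)` is
a multiple of `T_b`.
-/

open Finset

theorem sub_one_dvd_geom_sum_sub_natCast {R : Type*} [Ring R] (x : R) (n : ℕ) :
    x - 1 ∣ ∑ i ∈ range n, x ^ i - n := by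
  have : ∑ i ∈ range n, x ^ i - n = ∑ i ∈ range n, (x ^ i - 1) := by
    simp [sum_sub_distrib]
  exact this ▸ dvd_sum fun i _ => sub_one_dvd_pow_sub_one x i

namespace MonoidAlgebra

variable {R G : Type*}

noncomputable def zpowersNorm (R : Type*) [Semiring R] [Monoid G] (g : G) : R[G] :=
  ∑ i ∈ range (orderOf g), of R G g ^ i

theorem zpowersNorm_mul_sub_one [Ring R] [Monoid G] (g : G) :
    zpowersNorm R g * (of R G g - 1) = 0 := by
  rw [zpowersNorm, geom_sum_mul, ← map_pow, pow_orderOf_eq_one, map_one, sub_self]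

section Group

variable [Semiring R] [Group G] {g : G} {x : R[G]}

theorem coeff_mul_inv_pow_of_mul_of_eq_self (hx : x * of R G g = x) (c : G) (i : ℕ) :
    x.coeff (c * (g ^ i)⁻¹) = x.coeff c := by
  have hxi : x * of R G g ^ i = x := by
    induction i with
    | zero => rw [pow_zero, mul_one]
    | succ i ih => rw [pow_succ, ← mul_assoc, ih, hx]
  rw [← map_pow, of_apply] at hxi
  simpa using congrArg (fun y : R[G] => y.coeff c) hxi

theorem exists_eq_mul_zpowersNorm_of_mul_of_eq_self (hg : IsOfFinOrder g)
    (hx : x * of R G g = x) : ∃ y, x = y * zpowersNorm R g := by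
  classical
  let rep (c : G) : G := (c : G ⧸ Subgroup.zpowers g).out
  -- `y` keeps the coefficients of `x` at the chosen representative of each coset of `⟨g⟩`.
  refine ⟨ofCoeff (x.coeff.filter fun c => rep c = c), ?_⟩
  ext e
  obtain ⟨i₀, hi₀, hgi₀⟩ : ∃ i₀ < orderOf g, g ^ i₀ = (rep e)⁻¹ * e := by
    have : (rep e)⁻¹ * e ∈ Subgroup.zpowers g :=
      QuotientGroup.eq.mp (QuotientGroup.out_eq' (e : G ⧸ Subgroup.zpowers g))
    simpa using hg.mem_zpowers_iff_mem_range_orderOf.mp this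
  have hrep : ∀ i < orderOf g, (rep (e * (g ^ i)⁻¹) = e * (g ^ i)⁻¹ ↔ i = i₀) := by
    intro i hi
    have hcoset : rep (e * (g ^ i)⁻¹) = rep e := by
      refine congrArg Quotient.out (QuotientGroup.eq.mpr ?_)
      simp
    rw [hcoset]
    constructor
    · intro h
      exact pow_injOn_Iio_orderOf hi hi₀ (by simp only [hgi₀, h]; group)
    · rintro rfl
      rw [hgi₀]
      group
  simp only [zpowersNorm, mul_sum, coeff_sum, Finsupp.finsetSum_apply, of_apply, single_pow,
    one_pow, coeff_mul_single_apply, Finsupp.filter_apply, mul_one]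
  rw [sum_eq_single_of_mem i₀ (mem_range.mpr hi₀)]
  · rw [if_pos ((hrep i₀ hi₀).mpr rfl), coeff_mul_inv_pow_of_mul_of_eq_self hx]
  · intro i hi hne
    rw [if_neg fun h => hne ((hrep i (mem_range.mp hi)).mp h)]

end Group

theorem mul_of_sub_one_eq_zero_iff [Ring R] [Group G] {g : G} (hg : IsOfFinOrder g) {x : R[G]} :
    x * (of R G g - 1) = 0 ↔ ∃ y, x = y * zpowersNorm R g := by
  constructor
  · intro hx
    exact exists_eq_mul_zpowersNorm_of_mul_of_eq_self hg (sub_eq_zero.mp (by rwa [← mul_sub_one]))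
  · rintro ⟨y, rfl⟩
    rw [mul_assoc, zpowersNorm_mul_sub_one, mul_zero]

section CommGroup

variable [CommRing R] [CommGroup G] {a b : G}

theorem mem_span_zpowersNorm_sub_one_of_mul_sub_one_eq (ha : IsOfFinOrder a)
    (hab : (orderOf a).Coprime (orderOf b)) {w z : R[G]}
    (hwz : w * (of R G a - 1) = z * (of R G b - 1)) :
    w ∈ Ideal.span {zpowersNorm R a, of R G b - 1} := by
  set I := Ideal.span {zpowersNorm R a, of R G b - 1}
  have hNa : zpowersNorm R a ∈ I := Ideal.subset_span (by simp)
  have hb1 : of R G b - 1 ∈ I := Ideal.subset_span (by simp)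
  have hpw : (orderOf a : R[G]) * w ∈ I := by
    obtain ⟨r, hr⟩ := sub_one_dvd_geom_sum_sub_natCast (of R G a) (orderOf a)
    have : (orderOf a : R[G]) * w = w * zpowersNorm R a - z * r * (of R G b - 1) := by
      rw [zpowersNorm]
      linear_combination (-w) * hr - r * hwz
    rw [this]
    exact I.sub_mem (I.mul_mem_left _ hNa) (I.mul_mem_left _ hb1)
  have hdw : (orderOf b : R[G]) * w ∈ I := by
    obtain ⟨y, hy⟩ := (mul_of_sub_one_eq_zero_iff ha (x := w * zpowersNorm R b)).mp <| by
      rw [mul_right_comm, hwz, mul_assoc, mul_comm _ (zpowersNorm R b), zpowersNorm_mul_sub_one,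
        mul_zero]
    obtain ⟨r, hr⟩ := sub_one_dvd_geom_sum_sub_natCast (of R G b) (orderOf b)
    have : (orderOf b : R[G]) * w = y * zpowersNorm R a - w * r * (of R G b - 1) := by
      rw [zpowersNorm] at hy
      linear_combination (-w) * hr + hy
    rw [this]
    exact I.sub_mem (I.mul_mem_left _ hNa) (I.mul_mem_left _ hb1)
  have hbezout : (1 : R[G]) = orderOf a * Nat.gcdA (orderOf a) (orderOf b)
      + orderOf b * Nat.gcdB (orderOf a) (orderOf b) := by
    exact_mod_cast congrArg (Int.cast : ℤ → R[G]) (hab ▸ Nat.gcd_eq_gcd_ab (orderOf a) (orderOf b))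
  have : w = Nat.gcdA (orderOf a) (orderOf b) * ((orderOf a : R[G]) * w)
      + Nat.gcdB (orderOf a) (orderOf b) * ((orderOf b : R[G]) * w) := by
    linear_combination w * hbezout
  rw [this]
  exact I.add_mem (I.mul_mem_left _ hpw) (I.mul_mem_left _ hdw)

theorem mul_sub_one_add_mul_sub_one_eq_zero_iff (ha : IsOfFinOrder a) (hb : IsOfFinOrder b)
    (hab : (orderOf a).Coprime (orderOf b)) (u w : R[G]) :
    u * (of R G b - 1) + w * (of R G a - 1) = 0 ↔
      (u, w) ∈ Submodule.span R[G] {(of R G a - 1, -(of R G b - 1)), (zpowersNorm R b, 0),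
        (0, zpowersNorm R a)} := by
  rw [Submodule.mem_span_triple]
  constructor
  · intro huw
    obtain ⟨f, h, hw⟩ := Ideal.mem_span_pair.mp <|
      mem_span_zpowersNorm_sub_one_of_mul_sub_one_eq ha hab (w := w) (z := -u)
        (by linear_combination huw)
    obtain ⟨g, hg⟩ := (mul_of_sub_one_eq_zero_iff hb (x := u + h * (of R G a - 1))).mp <| by
      linear_combination huw - f * zpowersNorm_mul_sub_one (R := R) a + (of R G a - 1) * hw
    refine ⟨-h, g, f, Prod.ext ?_ ?_⟩
    · simp only [Prod.fst_add, Prod.smul_fst, smul_eq_mul, mul_zero, add_zero]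
      linear_combination -hg
    · simp only [Prod.snd_add, Prod.smul_snd, smul_eq_mul, mul_zero]
      linear_combination hw
  · rintro ⟨h, g, f, huw⟩
    simp only [Prod.ext_iff, Prod.fst_add, Prod.snd_add, Prod.smul_fst, Prod.smul_snd, smul_eq_mul,
      mul_zero, add_zero] at huw
    obtain ⟨rfl, rfl⟩ := huw
    linear_combination g * zpowersNorm_mul_sub_one (R := R) b + f * zpowersNorm_mul_sub_one (R := R) a

end CommGroup

end MonoidAlgebra

theorem kernel_delta_two_generators_general
    (p d : ℕ) (hp : 0 < p) (hd : 0 < d) (hpd : Nat.Coprime p d)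
    (G : Type*) [CommGroup G] (a b : G)
    (hA : orderOf a = p) (hB : orderOf b = d) :
    ∀ v : MonoidAlgebra ℤ G × MonoidAlgebra ℤ G,
      (v.1 * (MonoidAlgebra.of ℤ G b - 1) + v.2 * (MonoidAlgebra.of ℤ G a - 1) = 0 ↔
        v ∈ Submodule.span (MonoidAlgebra ℤ G)
          ({(MonoidAlgebra.of ℤ G a - 1, -(MonoidAlgebra.of ℤ G b - 1)),
            (∑ j ∈ range d, MonoidAlgebra.of ℤ G b ^ j, 0),
            (0, ∑ i ∈ range p, MonoidAlgebra.of ℤ G a ^ i)} :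
            Set (MonoidAlgebra ℤ G × MonoidAlgebra ℤ G))) := by
  subst hA hB
  exact fun v => MonoidAlgebra.mul_sub_one_add_mul_sub_one_eq_zero_iff
    (orderOf_pos_iff.mp hp) (orderOf_pos_iff.mp hd) hpd v.1 v.2

/-- **Lemma 4.1.5** (Bley–Cobbe): let `G = ⟨a⟩ × ⟨b⟩` with `ord(a) = p`, `ord(b) = d`,
`gcd(p,d) = 1`, and let `δ₂ : ℤ[G]z₁ ⊕ ℤ[G]z₂ → ℤ[G]z₀` be given by
`δ₂(z₁) = (b-1)z₀`, `δ₂(z₂) = (a-1)z₀`.  Then `ker δ₂` is generated as a `ℤ[G]`-module by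
`(a-1)z₁ - (b-1)z₂`, `T_b·z₁` and `T_a·z₂`. -/
theorem kernel_delta_two_generators
    (p d : ℕ) (hp : 0 < p) (hd : 0 < d) (hpd : Nat.Coprime p d)
    (G : Type*) [CommGroup G] (a b : G)
    (hA : orderOf a = p) (hB : orderOf b = d)
    (hgen : ∀ g : G, g ∈ Subgroup.closure {a, b}) :
    ∀ v : MonoidAlgebra ℤ G × MonoidAlgebra ℤ G,
      (v.1 * (MonoidAlgebra.of ℤ G b - 1) + v.2 * (MonoidAlgebra.of ℤ G a - 1) = 0 ↔
        v ∈ Submodule.span (MonoidAlgebra ℤ G)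
          ({(MonoidAlgebra.of ℤ G a - 1, -(MonoidAlgebra.of ℤ G b - 1)),
            (∑ j ∈ range d, MonoidAlgebra.of ℤ G b ^ j, 0),
            (0, ∑ i ∈ range p, MonoidAlgebra.of ℤ G a ^ i)} :
            Set (MonoidAlgebra ℤ G × MonoidAlgebra ℤ G))) :=
  kernel_delta_two_generators_general p d hp hd hpd G a b hA hB
end

section
/- Let F_0 be a Frobenius-type topological generator acting on the unit group U of the completion of the maximal unramified extension N̂_0 of a local field N (with algebraically closed residue field in N_0). Then the map z ↦ z^{F_0 - 1} := F_0(z)/z from U to U is surjective. -/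
/-!
Write `g z = F₀ z - u z`, an additive map preserving every power `𝔪ⁿ` of the maximal ideal.
On residues, `g z ≡ 0 mod 𝔪` is the equation `ζ^Q = ū ζ` with `Q = p^k`, which has a nonzero
root since the residue field `κ` is algebraically closed; this gives a unit `z₀` with
`g z₀ ∈ 𝔪`. On each graded piece `𝔪ⁿ/𝔪ⁿ⁺¹ ≅ κ` (via a uniformizer `π`, with `F₀ π = π w`), `g`
becomes the map `β ↦ w̄ⁿ β^Q - ū β`, again surjective because `κ` is algebraically closed.
By completeness `g` is therefore surjective on `𝔪`, so `g z₀ = g s` for some `s ∈ 𝔪`, and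
`z₀ - s` is the required unit.
-/

open IsLocalRing

open Polynomial in
theorem IsAlgClosed.exists_mul_pow_sub_mul_eq {k : Type*} [Field k] [IsAlgClosed k] {Q : ℕ}
    (hQ : 1 < Q) {a : k} (ha : a ≠ 0) (e c : k) : ∃ x, a * x ^ Q - e * x = c := by
  have hdeg : (C a * X ^ Q - C e * X - C c).natDegree = Q := by
    compute_degree!
    · rw [if_neg hQ.ne', if_neg (by omega), sub_zero, sub_zero]; exact ha
    all_goals omega
  obtain ⟨x, hx⟩ := IsAlgClosed.exists_root (C a * X ^ Q - C e * X - C c)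
    (natDegree_pos_iff_degree_pos.mp (by omega)).ne'
  exact ⟨x, by simpa [sub_eq_zero] using hx⟩

section AdicComplete

variable {R : Type*} [CommRing R] {I : Ideal R} [IsAdicComplete I R]

theorem IsAdicComplete.exists_forall_sub_mem_pow {f : ℕ → R} (hf : ∀ n, f (n + 1) - f n ∈ I ^ n) :
    ∃ L, ∀ n, f n - L ∈ I ^ n := by
  have hcauchy : ∀ m n, m ≤ n → f n - f m ∈ I ^ m := by
    intro m n hmn
    induction n, hmn using Nat.le_induction with
    | base => simp
    | succ n hmn ih =>
      rw [← sub_add_sub_cancel]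
      exact add_mem (Ideal.pow_le_pow_right hmn (hf n)) ih
  obtain ⟨L, hL⟩ := IsAdicComplete.toIsPrecomplete.prec (I := I) (f := f) fun hmn => by
    rw [SModEq.comm, SModEq.sub_mem, smul_eq_mul, Ideal.mul_top]
    exact hcauchy _ _ hmn
  exact ⟨L, fun n => by simpa [SModEq.sub_mem] using hL n⟩

theorem IsAdicComplete.eq_zero_of_forall_mem_pow {x : R} (hx : ∀ n, x ∈ I ^ n) : x = 0 :=
  (IsAdicComplete.toIsHausdorff (I := I)).haus x fun n => by
    simpa [SModEq.zero, smul_eq_mul, Ideal.mul_top] using hx n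

theorem IsAdicComplete.surjOn_pow (g : R →+ R) (hg : ∀ n, ∀ x ∈ I ^ n, g x ∈ I ^ n)
    (hgraded : ∀ n, ∀ c ∈ I ^ n, ∃ s ∈ I ^ n, g s - c ∈ I ^ (n + 1)) (m : ℕ) :
    Set.SurjOn g (I ^ m : Ideal R) (I ^ m : Ideal R) := by
  intro c hc
  choose! σ hσ hgσ using hgraded
  let s : ℕ → R := fun k => Nat.rec 0 (fun k sk => sk + σ (m + k) (c - g sk)) k
  have hsucc : ∀ k, s (k + 1) = s k + σ (m + k) (c - g (s k)) := fun _ => rfl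
  have hs : ∀ k, s k ∈ I ^ m ∧ c - g (s k) ∈ I ^ (m + k) := by
    intro k
    induction k with
    | zero => simpa [s] using hc
    | succ k ih =>
      refine ⟨add_mem ih.1 (Ideal.pow_le_pow_right le_self_add (hσ _ _ ih.2)), ?_⟩
      rw [hsucc, map_add, ← sub_sub, ← neg_sub, ← add_assoc]
      exact neg_mem (hgσ _ _ ih.2)
  obtain ⟨L, hL⟩ := IsAdicComplete.exists_forall_sub_mem_pow (I := I) (f := s) fun k => by
    rw [hsucc, add_sub_cancel_left]
    exact Ideal.pow_le_pow_right le_add_self (hσ _ _ (hs k).2)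
  refine ⟨L, ?_, ?_⟩
  · simpa using sub_mem (hs m).1 (hL m)
  · refine (sub_eq_zero.mp (IsAdicComplete.eq_zero_of_forall_mem_pow (I := I) fun n => ?_)).symm
    have := add_mem (Ideal.pow_le_pow_right le_add_self (hs n).2) (hg n _ (hL n))
    simpa [map_sub] using this

end AdicComplete

theorem IsLocalRing.map_mem_maximalIdeal_pow {R S : Type*} [CommRing R] [IsLocalRing R]
    [CommRing S] [IsLocalRing S] (f : R →+* S) [IsLocalHom f] {n : ℕ} {x : R}
    (hx : x ∈ maximalIdeal R ^ n) : f x ∈ maximalIdeal S ^ n := by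
  have := Ideal.mem_map_of_mem f hx
  rw [Ideal.map_pow] at this
  exact Ideal.pow_right_mono (map_maximalIdeal_le f) n this

section Frobenius

variable {R : Type*} [CommRing R] {Q : ℕ}

theorem IsLocalRing.exists_isUnit_map_sub_mul_mem_maximalIdeal [IsLocalRing R]
    [IsAlgClosed (ResidueField R)] (hQ : 1 < Q) (F : R →+* R)
    (hF : ∀ x, residue R (F x) = residue R x ^ Q) (u : Rˣ) :
    ∃ z, IsUnit z ∧ F z - u * z ∈ maximalIdeal R := by
  obtain ⟨x, hx⟩ := IsAlgClosed.exists_pow_nat_eq (residue R u) (Nat.sub_pos_of_lt hQ)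
  obtain ⟨z, rfl⟩ := residue_surjective x
  have hu : residue R u ≠ 0 := (residue_ne_zero_iff_isUnit _).mpr u.isUnit
  refine ⟨z, (residue_ne_zero_iff_isUnit z).mp ?_, ?_⟩
  · rintro hz
    rw [hz, zero_pow (by omega)] at hx
    exact hu hx.symm
  · rw [← residue_eq_zero_iff, map_sub, map_mul, hF, ← hx, ← pow_succ, Nat.sub_add_cancel hQ.le,
      sub_self]

theorem IsDiscreteValuationRing.exists_mem_pow_map_sub_mul_sub_mem [IsDomain R]
    [IsDiscreteValuationRing R] [IsAlgClosed (ResidueField R)] (hQ : 1 < Q) (F : R ≃+* R)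
    (hF : ∀ x, residue R (F x) = residue R x ^ Q) (a : R) (n : ℕ) {c : R}
    (hc : c ∈ IsLocalRing.maximalIdeal R ^ n) :
    ∃ s ∈ IsLocalRing.maximalIdeal R ^ n,
      F s - a * s - c ∈ IsLocalRing.maximalIdeal R ^ (n + 1) := by
  obtain ⟨π, hπ⟩ := exists_irreducible R
  obtain ⟨w, hw⟩ := associated_of_irreducible R hπ (hπ.map F)
  rw [hπ.maximalIdeal_eq, Ideal.span_singleton_pow, Ideal.mem_span_singleton'] at hc
  obtain ⟨c', rfl⟩ := hc
  have hw0 : residue R (w ^ n : Rˣ) ≠ 0 := (residue_ne_zero_iff_isUnit _).mpr (w ^ n).isUnit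
  obtain ⟨x, hx⟩ := IsAlgClosed.exists_mul_pow_sub_mul_eq hQ hw0 (residue R a) (residue R c')
  obtain ⟨b, rfl⟩ := residue_surjective x
  -- the correction is `s = πⁿ b`, with `b` lifting a root of `w̄ⁿ X^Q - ā X - c̄'`
  have hfactor : F (π ^ n * b) - a * (π ^ n * b) - c' * π ^ n
      = π ^ n * (w ^ n * F b - a * b - c') := by
    rw [map_mul, map_pow, ← hw]
    ring
  refine ⟨π ^ n * b, ?_, ?_⟩
  · rw [hπ.maximalIdeal_eq, Ideal.span_singleton_pow]
    exact Ideal.mul_mem_right _ _ (Ideal.mem_span_singleton_self _)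
  · rw [hfactor, pow_succ]
    refine Ideal.mul_mem_mul (Ideal.pow_mem_pow ((mem_maximalIdeal π).mpr hπ.not_isUnit) _) ?_
    rw [← residue_eq_zero_iff, map_sub, map_sub, map_mul, map_mul, hF, ← hx]
    push_cast
    ring

end Frobenius

theorem frobenius_sub_one_surjective_on_units_general
    (p k : ℕ) [Fact p.Prime] (hk : 0 < k)
    (R : Type*) [CommRing R] [IsDomain R] [IsDiscreteValuationRing R]
    [IsAdicComplete (IsLocalRing.maximalIdeal R) R]
    [IsAlgClosed (IsLocalRing.ResidueField R)]
    (F₀ : R ≃+* R)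
    (hFrob : ∀ x : R, IsLocalRing.residue R (F₀ x)
      = (IsLocalRing.residue R x) ^ (p ^ k)) :
    ∀ u : Rˣ, ∃ z : Rˣ, F₀ (z : R) = (u : R) * (z : R) := by
  intro u
  have hQ : 1 < p ^ k := Nat.one_lt_pow hk.ne' (Fact.out : p.Prime).one_lt
  let g : R →+ R := F₀.toAddMonoidHom - AddMonoidHom.mulLeft (u : R)
  obtain ⟨z₀, hz₀, hgz₀⟩ :=
    exists_isUnit_map_sub_mul_mem_maximalIdeal hQ (F₀ : R →+* R) hFrob u
  have hg : ∀ n, ∀ x ∈ maximalIdeal R ^ n, g x ∈ maximalIdeal R ^ n := fun _ _ hx =>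
    sub_mem (map_mem_maximalIdeal_pow (F₀ : R →+* R) hx) (Ideal.mul_mem_left _ _ hx)
  obtain ⟨s, hs, hgs⟩ := IsAdicComplete.surjOn_pow g hg
    (fun n _ hc => IsDiscreteValuationRing.exists_mem_pow_map_sub_mul_sub_mem hQ F₀ hFrob u n hc)
    1 (show g z₀ ∈ maximalIdeal R ^ 1 by rw [pow_one]; exact hgz₀)
  have hz : IsUnit (z₀ - s) := by
    rw [← residue_ne_zero_iff_isUnit, map_sub, (residue_eq_zero_iff s).mpr (by simpa using hs),
      sub_zero, residue_ne_zero_iff_isUnit]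
    exact hz₀
  refine ⟨hz.unit, ?_⟩
  have hgz : g (z₀ - s) = 0 := by rw [map_sub, hgs, sub_self]
  simpa [g, sub_eq_zero] using hgz

/-- **Lemma 3.1.5 / Neukirch V.2.1** (first part): let `R` be a complete discrete valuation
ring with algebraically closed residue field of characteristic `p`, and let `F₀` be a
Frobenius-type automorphism of `R`, i.e. one inducing `x ↦ x^Q` on the residue field for a
positive power `Q = q^d` of `p`.  Then the map `z ↦ z^{F₀ - 1} = F₀(z)/z` on the unit
group of `R` is surjective: for every unit `u` there is a unit `z` with `F₀(z) = u·z`. -/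
theorem frobenius_sub_one_surjective_on_units
    (p k : ℕ) [Fact p.Prime] (hk : 0 < k)
    (R : Type*) [CommRing R] [IsDomain R] [IsLocalRing R] [IsDiscreteValuationRing R]
    [IsAdicComplete (IsLocalRing.maximalIdeal R) R]
    [IsAlgClosed (IsLocalRing.ResidueField R)]
    [CharP (IsLocalRing.ResidueField R) p]
    (F₀ : R ≃+* R)
    (hFrob : ∀ x : R, IsLocalRing.residue R (F₀ x)
      = (IsLocalRing.residue R x) ^ (p ^ k)) :
    ∀ u : Rˣ, ∃ z : Rˣ, F₀ (z : R) = (u : R) * (z : R) :=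
  frobenius_sub_one_surjective_on_units_general p k hk R F₀ hFrob
end

section
/- Let p be an odd prime, ζ_p a primitive p-th root of unity, and χ(a) = ζ_p^k for some k not divisible by p. Then (χ(a) - 1)^{p-1}/p ≡ -1 (mod (1 - ζ_p)) in the ring of integers Z[ζ_p]. -/
open Finset

private lemma dvd_prod_sub_prod {α β : Type*} [CommRing β] (d : β) (s : Finset α)
    (f g : α → β) (h : ∀ i ∈ s, d ∣ f i - g i) :
    d ∣ (∏ i ∈ s, f i) - ∏ i ∈ s, g i := by
  classical
  induction s using Finset.induction with
  | empty => simp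
  | @insert a s ha ih =>
    rw [Finset.prod_insert ha, Finset.prod_insert ha]
    have h1 : d ∣ f a - g a := h a (Finset.mem_insert_self a s)
    have h2 : d ∣ (∏ i ∈ s, f i) - ∏ i ∈ s, g i :=
      ih fun i hi => h i (Finset.mem_insert_of_mem hi)
    have : f a * ∏ i ∈ s, f i - g a * ∏ i ∈ s, g i
        = (f a - g a) * ∏ i ∈ s, f i + g a * ((∏ i ∈ s, f i) - ∏ i ∈ s, g i) := by ring
    rw [this]
    exact dvd_add (h1.mul_right _) (h2.mul_left _)

/-- (Bley–Cobbe, Section 6): for an odd prime `p`, a primitive `p`-th root of unity `ζ`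
and `k` not divisible by `p`, one has `(ζ^k - 1)^(p-1)/p ≡ -1 (mod (1 - ζ))` in `ℤ[ζ]`:
i.e. there is `z ∈ ℤ[ζ]` with `(ζ^k - 1)^(p-1) + p = p·(1 - ζ)·z`. -/
theorem zeta_pow_sub_one_pow_div_p_congruent_neg_one
    (p : ℕ) (hp : p.Prime) (hodd : Odd p)
    (ζ : ℂ) (hζ : IsPrimitiveRoot ζ p)
    (k : ℕ) (hk : ¬ (p ∣ k)) :
    ∃ z ∈ Algebra.adjoin ℤ ({ζ} : Set ℂ),
      (ζ ^ k - 1) ^ (p - 1) + p = p * (1 - ζ) * z := by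
  haveI : Fact p.Prime := ⟨hp⟩
  have hp2 : 2 ≤ p := hp.two_le
  set A := Algebra.adjoin ℤ ({ζ} : Set ℂ) with hA
  let ξ : A := ⟨ζ, Algebra.self_mem_adjoin_singleton ℤ ζ⟩
  let t : ℕ → A := fun j => ∑ i ∈ range j, ξ ^ i
  have ht : ∀ j, t j * (ξ - 1) = ξ ^ j - 1 := fun j => geom_sum_mul ξ j
  let T : A := ∏ j ∈ range (p - 1), t (j + 1)
  have hζ1 : ζ ≠ 1 := hζ.ne_one (by omega)
  have hξ1 : ξ - (1 : A) ≠ 0 := by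
    intro h
    apply hζ1
    have := congrArg (Subtype.val) h
    simp only [AddSubgroupClass.coe_sub, OneMemClass.coe_one, ZeroMemClass.coe_zero, ξ] at this
    linear_combination this
  -- key factorization p = (1-ξ)^(p-1) * T
  have hpT : (p : A) = (1 - ξ) ^ (p - 1) * T := by
    obtain ⟨n, rfl⟩ : ∃ n, p = n + 1 := ⟨p - 1, by omega⟩
    have hC := hζ.prod_one_sub_pow_eq_order
    apply Subtype.ext
    push_cast
    simp only [Nat.add_sub_cancel, T, t]
    push_cast
    rw [← hC,
      show ((1 : ℂ) - ζ) ^ n = ∏ _x ∈ range n, (1 - ζ) by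
        rw [Finset.prod_const, Finset.card_range],
      ← Finset.prod_mul_distrib]
    refine Finset.prod_congr rfl fun j _ => ?_
    linear_combination geom_sum_mul ζ (j + 1)
  -- congruences mod (ξ - 1)
  have hdt : ∀ j, (ξ - 1) ∣ t j - (j : A) := by
    intro j
    have h : t j - (j : A) = ∑ i ∈ range j, (ξ ^ i - 1) := by
      simp [t, Finset.sum_sub_distrib]
    rw [h]
    exact Finset.dvd_sum fun i _ => ⟨t i, by linear_combination -(ht i)⟩
  have hfact : ∀ n : ℕ, (∏ j ∈ range n, ((j : A) + 1)) = (n.factorial : A) := by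
    intro n
    induction n with
    | zero => simp
    | succ n ih => rw [Finset.prod_range_succ, ih, Nat.factorial_succ]; push_cast; ring
  have hdT : (ξ - 1) ∣ T - ((p - 1).factorial : A) := by
    have h := dvd_prod_sub_prod (ξ - 1) (range (p - 1)) (fun j => t (j + 1))
      (fun j => ((j : A) + 1)) (fun j _ => by simpa using hdt (j + 1))
    simpa [hfact (p - 1)] using h
  set S : A := t k with hS
  have hdS : (ξ - 1) ∣ S ^ (p - 1) - ((k : A) ^ (p - 1)) :=
    (hdt k).trans (sub_dvd_pow_sub_pow S (k : A) (p - 1))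
  -- Fermat + Wilson: p ∣ k^(p-1) + (p-1)!
  have hN : p ∣ k ^ (p - 1) + (p - 1).factorial := by
    have hk0 : (k : ZMod p) ≠ 0 := by
      rwa [Ne, ZMod.natCast_eq_zero_iff]
    have h1 : (k : ZMod p) ^ (p - 1) = 1 := ZMod.pow_card_sub_one_eq_one hk0
    have h2 : ((p - 1).factorial : ZMod p) = -1 := ZMod.wilsons_lemma p
    rw [← ZMod.natCast_eq_zero_iff]
    push_cast
    rw [h1, h2]
    ring
  have hdp : (ξ - 1) ∣ (p : A) := by
    rw [hpT]
    refine Dvd.dvd.mul_right ?_ T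
    have h : (1 - ξ) ^ (p - 1) = (1 - ξ) ^ (p - 2) * (1 - ξ) := by
      rw [← pow_succ]; congr 1; omega
    exact ⟨-(1 - ξ) ^ (p - 2), by rw [h]; ring⟩
  -- (ξ - 1) ∣ S^(p-1) + T
  have hdiv : (ξ - 1) ∣ S ^ (p - 1) + T := by
    obtain ⟨m, hm⟩ := hN
    have hcast : ((k : A) ^ (p - 1) + ((p - 1).factorial : A)) = (p : A) * (m : A) := by
      have h := congrArg (Nat.cast : ℕ → A) hm
      push_cast at h
      exact h
    have h : S ^ (p - 1) + T
        = (S ^ (p - 1) - (k : A) ^ (p - 1)) + (T - ((p - 1).factorial : A))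
          + (p : A) * (m : A) := by rw [← hcast]; ring
    rw [h]
    exact dvd_add (dvd_add hdS hdT) (hdp.mul_right _)
  obtain ⟨c, hc⟩ := hdiv
  -- each geometric-sum factor is a unit
  have hinv : ∀ j ∈ range (p - 1), ∃ u : A, t (j + 1) * u = 1 := by
    intro j hj
    rw [Finset.mem_range] at hj
    set a : ℕ := j + 1 with hadef
    have ha0 : ((a : ℕ) : ZMod p) ≠ 0 := by
      rw [Ne, ZMod.natCast_eq_zero_iff]
      intro h
      have := Nat.le_of_dvd (by omega) h
      omega
    set m : ℕ := ((a : ZMod p))⁻¹.val with hmdef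
    have hmval : ((m : ℕ) : ZMod p) = ((a : ZMod p))⁻¹ := by
      exact ZMod.natCast_rightInverse ((a : ZMod p))⁻¹
    have hmod : (a * m) % p = 1 % p := by
      have h : ((a * m : ℕ) : ZMod p) = ((1 : ℕ) : ZMod p) := by
        rw [Nat.cast_mul, Nat.cast_one, hmval, mul_inv_cancel₀ ha0]
      exact (ZMod.natCast_eq_natCast_iff _ _ _).mp h
    have h1p : 1 % p = 1 := Nat.mod_eq_of_lt (by omega)
    have ham : 1 ≤ a * m := by
      rcases Nat.eq_zero_or_pos (a * m) with h0 | h0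
      · rw [h0, Nat.zero_mod, h1p] at hmod; omega
      · omega
    obtain ⟨q, hq⟩ : p ∣ a * m - 1 := (Nat.modEq_iff_dvd' ham).mp hmod.symm
    have ham2 : a * m = p * q + 1 := by omega
    have hzam : ζ ^ (a * m) = ζ := by
      rw [ham2, pow_succ, pow_mul, hζ.pow_eq_one, one_pow, one_mul]
    have hxam : ξ ^ (a * m) = ξ := by
      apply Subtype.ext
      push_cast
      exact hzam
    refine ⟨∑ i ∈ range m, (ξ ^ a) ^ i, ?_⟩
    have hgs : (∑ i ∈ range m, (ξ ^ a) ^ i) * (ξ ^ a - 1) = ξ - 1 := by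
      rw [geom_sum_mul, ← pow_mul, hxam]
    apply mul_right_cancel₀ hξ1
    calc t a * (∑ i ∈ range m, (ξ ^ a) ^ i) * (ξ - 1)
        = (∑ i ∈ range m, (ξ ^ a) ^ i) * (t a * (ξ - 1)) := by ring
      _ = (∑ i ∈ range m, (ξ ^ a) ^ i) * (ξ ^ a - 1) := by rw [ht a]
      _ = ξ - 1 := hgs
      _ = 1 * (ξ - 1) := by ring
  choose u hu using hinv
  let T' : A := ∏ j ∈ (range (p - 1)).attach, u j.1 j.2
  have hTT' : T * T' = 1 := by
    have h1 : T = ∏ j ∈ (range (p - 1)).attach, t (j.1 + 1) :=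
      (Finset.prod_attach _ fun j => t (j + 1)).symm
    rw [h1, ← Finset.prod_mul_distrib]
    rw [Finset.prod_congr rfl fun j _ => hu j.1 j.2]
    simp
  -- final computation
  have heven : Even (p - 1) := Nat.Odd.sub_odd hodd odd_one
  have hsign : (ξ - 1) ^ (p - 1) = (1 - ξ) ^ (p - 1) := by
    rw [show ξ - 1 = -(1 - ξ) by ring, heven.neg_pow]
  set z : A := -(c * T') with hz
  have hmain : (ξ ^ k - 1) ^ (p - 1) + (p : A) = (p : A) * (1 - ξ) * z := by
    have e1 : ξ ^ k - 1 = S * (ξ - 1) := (ht k).symm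
    calc (ξ ^ k - 1) ^ (p - 1) + (p : A)
        = (1 - ξ) ^ (p - 1) * (S ^ (p - 1) + T) := by
          rw [e1, mul_pow, hsign, hpT]; ring
      _ = (1 - ξ) ^ (p - 1) * ((ξ - 1) * c) := by rw [hc]
      _ = (p : A) * (1 - ξ) * z := by
          rw [hz]
          linear_combination ((1 - ξ) * c * T') * hpT + ((1 - ξ) ^ (p - 1) * (1 - ξ) * c) * hTT'
  refine ⟨(z : ℂ), z.2, ?_⟩
  have h := congrArg (Subtype.val) hmain
  push_cast at h
  exact h
end

section
/- Let m, d be coprime positive integers and let α_{i,j}, β_{i,j} ∈ Z (indices i mod p, j mod d) satisfy α_{i,j-1} - α_{i,j} + β_{i-1,j} - β_{i,j} = 0 for all i, j. Then there exist integers γ_{i,j}, μ_i, ν_j such that α_{i,j} = γ_{i-1,j} - γ_{i,j} + μ_i and β_{i,j} = -γ_{i,j-1} + γ_{i,j} + ν_j for all i, j. -/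
/-- Combinatorial core of **Lemma 4.1.5** (Bley–Cobbe): given integers `α_{i,j}`, `β_{i,j}`
indexed by `i mod p`, `j mod d` (with `p, d` coprime positive integers) satisfying
`α_{i,j-1} - α_{i,j} + β_{i-1,j} - β_{i,j} = 0`, there exist integers `γ_{i,j}`, `μ_i`,
`ν_j` with `α_{i,j} = γ_{i-1,j} - γ_{i,j} + μ_i` and `β_{i,j} = -γ_{i,j-1} + γ_{i,j} + ν_j`. -/
theorem exists_gamma_mu_nu
    (p d : ℕ) (hp : 0 < p) (hd : 0 < d) (hpd : Nat.Coprime p d)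
    (α β : ZMod p → ZMod d → ℤ)
    (h : ∀ (i : ZMod p) (j : ZMod d),
      α i (j - 1) - α i j + β (i - 1) j - β i j = 0) :
    ∃ (γ : ZMod p → ZMod d → ℤ) (μ : ZMod p → ℤ) (ν : ZMod d → ℤ),
      (∀ i j, α i j = γ (i - 1) j - γ i j + μ i) ∧
      (∀ i j, β i j = -γ i (j - 1) + γ i j + ν j) := by
  haveI : NeZero p := ⟨hp.ne'⟩
  haveI : NeZero d := ⟨hd.ne'⟩
  -- the column sums of α
  set S : ZMod d → ℤ := fun j => ∑ i : ZMod p, α i j with hS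
  -- S is invariant under j ↦ j - 1
  have hstep : ∀ j : ZMod d, S (j - 1) = S j := by
    intro j
    have hsum : ∑ i : ZMod p, (α i (j - 1) - α i j + β (i - 1) j - β i j) = 0 :=
      Finset.sum_eq_zero fun i _ => h i j
    have hβ : ∑ i : ZMod p, β (i - 1) j = ∑ i : ZMod p, β i j :=
      Fintype.sum_equiv (Equiv.subRight (1 : ZMod p)) _ _ (fun i => rfl)
    have := hsum
    simp only [Finset.sum_add_distrib, Finset.sum_sub_distrib] at this
    simp only [hS]
    omega
  -- hence S is constant
  have hconst : ∀ j : ZMod d, S j = S 0 := by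
    have hnat : ∀ n : ℕ, S ((n : ℕ) : ZMod d) = S 0 := by
      intro n
      induction n with
      | zero => simp
      | succ k ih =>
        have := hstep ((k + 1 : ℕ) : ZMod d)
        have h1 : (((k + 1 : ℕ) : ZMod d) - 1) = ((k : ℕ) : ZMod d) := by
          push_cast; ring
        rw [h1, ih] at this
        rw [← this]
    intro j
    have : ((j.val : ℕ) : ZMod d) = j := ZMod.natCast_zmod_val j
    rw [← this, hnat]
  -- partial sums of α along a column
  set g : ℕ → ZMod d → ℤ := fun n j => ∑ ℓ ∈ Finset.range n, α (((ℓ + 1 : ℕ)) : ZMod p) j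
    with hg
  refine ⟨fun i j => -(g i.val j), fun i => if i = 0 then S 0 else 0, fun j => β 0 j, ?_, ?_⟩
  · intro i j
    by_cases hi : i = 0
    · subst hi
      simp only [eq_self_iff_true, if_true]
      have hval : ((0 : ZMod p) - 1).val = p - 1 := by
        have h1 : ((0 : ZMod p) - 1) = ((p - 1 : ℕ) : ZMod p) := by
          push_cast [Nat.cast_sub hp]
          simp
        rw [h1, ZMod.val_cast_of_lt (by omega)]
      have hzero : (0 : ZMod p).val = 0 := ZMod.val_zero
      -- S j = α 0 j + g (p-1) j
      have hsplit : S j = α 0 j + g (p - 1) j := by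
        have huniv : S j = ∑ ℓ ∈ Finset.range p, α ((ℓ : ℕ) : ZMod p) j := by
          simp only [hS]
          refine Finset.sum_nbij' (fun a => a.val) (fun n => ((n : ℕ) : ZMod p)) ?_ ?_ ?_ ?_ ?_
          · intro a _; exact Finset.mem_range.2 (ZMod.val_lt a)
          · intro a _; exact Finset.mem_univ _
          · intro a _; exact ZMod.natCast_zmod_val a
          · intro a ha; exact ZMod.val_cast_of_lt (Finset.mem_range.1 ha)
          · intro a _; rw [ZMod.natCast_zmod_val]
        have hps := Finset.sum_range_succ' (fun ℓ : ℕ => α ((ℓ : ℕ) : ZMod p) j) (p - 1)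
        rw [show p - 1 + 1 = p from by omega] at hps
        rw [huniv, hps]
        simp only [hg, Nat.cast_zero]
        ring
      rw [hval, hzero]
      have hg0 : g 0 j = 0 := by simp [hg]
      have := hconst j
      omega
    · simp only [if_neg hi]
      have hvpos : 0 < i.val :=
        Nat.pos_of_ne_zero (fun h' => hi ((ZMod.val_eq_zero i).1 h'))
      have hval : (i - 1).val = i.val - 1 := by
        have h1 : i - 1 = ((i.val - 1 : ℕ) : ZMod p) := by
          rw [Nat.cast_sub hvpos, Nat.cast_one, ZMod.natCast_zmod_val]
        rw [h1, ZMod.val_cast_of_lt (by have := ZMod.val_lt i; omega)]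
      rw [hval]
      have hss := Finset.sum_range_succ (fun ℓ : ℕ => α (((ℓ + 1 : ℕ)) : ZMod p) j) (i.val - 1)
      rw [show i.val - 1 + 1 = i.val from by omega] at hss
      simp only [hg]
      rw [hss, ZMod.natCast_zmod_val i]
      ring
  · intro i j
    -- -γ i (j-1) + γ i j + β 0 j = g i.val (j-1) - g i.val j + β 0 j
    have hdiff : g i.val (j - 1) - g i.val j = β i j - β 0 j := by
      have hterm : ∀ ℓ : ℕ, α (((ℓ + 1 : ℕ)) : ZMod p) (j - 1) - α (((ℓ + 1 : ℕ)) : ZMod p) j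
          = β (((ℓ + 1 : ℕ)) : ZMod p) j - β (((ℓ : ℕ)) : ZMod p) j := by
        intro ℓ
        have hsub : (((ℓ + 1 : ℕ)) : ZMod p) - 1 = ((ℓ : ℕ) : ZMod p) := by
          push_cast; ring
        have := h (((ℓ + 1 : ℕ)) : ZMod p) j
        rw [hsub] at this
        omega
      have : g i.val (j - 1) - g i.val j
          = ∑ ℓ ∈ Finset.range i.val,
              (β (((ℓ + 1 : ℕ)) : ZMod p) j - β (((ℓ : ℕ)) : ZMod p) j) := by
        simp only [hg, ← Finset.sum_sub_distrib]
        exact Finset.sum_congr rfl fun ℓ _ => hterm ℓ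
      rw [this, Finset.sum_range_sub (fun ℓ => β ((ℓ : ℕ) : ZMod p) j)]
      rw [ZMod.natCast_zmod_val i]
      simp
    dsimp only
    omega
end
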